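/- arXiv:1208.0812 — 3 statements merged into one kernel-verified Lean document; each statement's English description precedes it below -/
import Mathlib

section
/- For every integer r ≥ 5, the inequality (r-2)·2^(r-1) + (r/2)^r < (r-1)^(r-1) holds. -/
lemma exp_five_fourths_lt_four : Real.exp (5/4) < 4 := by
  have h4 : Real.exp (5/4) ^ (4:ℕ) = Real.exp 5 := by
    rw [← Real.exp_nat_mul]; norm_num
  have h5 : Real.exp 5 < 256 := by
    have h1 : Real.exp 5 = (Real.exp 1) ^ (5:ℕ) := by
      rw [← Real.exp_nat_mul]; norm_num
    have := Real.exp_one_lt_d9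
    have hp : (Real.exp 1) ^ (5:ℕ) < 2.7182818286 ^ (5:ℕ) :=
      pow_lt_pow_left₀ this (Real.exp_pos 1).le (by norm_num)
    nlinarith [Real.exp_pos 1]
  have : Real.exp (5/4) ^ (4:ℕ) < 4 ^ (4:ℕ) := by
    rw [h4]; norm_num; linarith
  exact lt_of_pow_lt_pow_left₀ 4 (by norm_num) this

lemma key_ineq (n : ℕ) (hn : 4 ≤ n) :
    ((n : ℝ) - 1) * 2 ^ n + (((n : ℝ) + 1) / 2) ^ (n + 1) < (n : ℝ) ^ n := by
  induction n, hn using Nat.le_induction with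
  | base => norm_num
  | succ n hn ih =>
    have hn4 : (4:ℝ) ≤ (n:ℝ) := by exact_mod_cast hn
    have hn0 : (0:ℝ) < n := by linarith
    push_cast
    -- A : 2*(n+1)*n^n ≤ (n+1)^(n+1)
    have hA : 2 * ((n:ℝ) + 1) * (n:ℝ) ^ n ≤ ((n:ℝ) + 1) ^ (n + 1) := by
      have h1 : (2:ℝ) ≤ (1 + 1/(n:ℝ)) ^ n := by
        have hnn : (0:ℝ) ≤ 1/(n:ℝ) := by positivity
        have hb := one_add_mul_le_pow (a := 1/(n:ℝ)) (by linarith) n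
        rw [mul_one_div, div_self hn0.ne'] at hb
        linarith
      have h2 : ((1 + 1/(n:ℝ)) ^ n) * (n:ℝ) ^ n = ((n:ℝ) + 1) ^ n := by
        rw [← mul_pow]; congr 1; field_simp
      have h3 : 2 * (n:ℝ) ^ n ≤ ((n:ℝ) + 1) ^ n := by
        rw [← h2]
        nlinarith [pow_pos hn0 n]
      calc 2 * ((n:ℝ) + 1) * (n:ℝ) ^ n = ((n:ℝ)+1) * (2 * (n:ℝ)^n) := by ring
        _ ≤ ((n:ℝ)+1) * ((n:ℝ)+1)^n := by nlinarith
        _ = ((n:ℝ)+1)^(n+1) := by rw [pow_succ]; ring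
    -- B : (n+2)^(n+2) ≤ 4*(n+1)^(n+2)
    have hB : ((n:ℝ) + 2) ^ (n + 2) ≤ 4 * ((n:ℝ) + 1) ^ (n + 2) := by
      have h1 : (1 + 1/((n:ℝ)+1)) ^ (n+2) ≤ Real.exp ((n+2) * (1/((n:ℝ)+1))) := by
        calc (1 + 1/((n:ℝ)+1)) ^ (n+2) ≤ (Real.exp (1/((n:ℝ)+1))) ^ (n+2) := by
              apply pow_le_pow_left₀ (by positivity)
              have := Real.add_one_le_exp (1/((n:ℝ)+1)); linarith
          _ = Real.exp ((n+2) * (1/((n:ℝ)+1))) := by rw [← Real.exp_nat_mul]; push_cast; ring_nf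
      have h2 : ((n:ℝ)+2) * (1/((n:ℝ)+1)) ≤ 5/4 := by
        rw [mul_one_div, div_le_div_iff₀ (by linarith) (by norm_num)]; linarith
      have h3 : (1 + 1/((n:ℝ)+1)) ^ (n+2) < 4 := by
        calc (1 + 1/((n:ℝ)+1)) ^ (n+2) ≤ Real.exp ((n+2) * (1/((n:ℝ)+1))) := h1
          _ ≤ Real.exp (5/4) := Real.exp_le_exp.mpr (by push_cast; push_cast at h2; linarith)
          _ < 4 := exp_five_fourths_lt_four
      have h4 : ((1 + 1/((n:ℝ)+1)) * ((n:ℝ)+1)) ^ (n+2) = ((n:ℝ)+2)^(n+2) := by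
        congr 1; field_simp; ring
      rw [← h4, mul_pow]
      have hp : (0:ℝ) < ((n:ℝ)+1)^(n+2) := by positivity
      nlinarith
    -- B' : ((n+2)/2)^(n+2) ≤ 2*(n+1)*((n+1)/2)^(n+1)
    have hB' : (((n:ℝ) + 2) / 2) ^ (n + 2) ≤ 2 * ((n:ℝ)+1) * (((n:ℝ)+1)/2)^(n+1) := by
      rw [div_pow, div_pow]
      rw [div_le_iff₀ (by positivity)]
      have he : 2 * ((n:ℝ)+1) * (((n:ℝ)+1)^(n+1) / 2^(n+1)) * 2^(n+2)
          = 4 * ((n:ℝ)+1)^(n+2) := by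
        rw [pow_succ ((n:ℝ)+1) (n+1), pow_succ (2:ℝ) (n+1)]
        field_simp
        ring
      rw [he]; exact hB
    have hpa : (0:ℝ) < 2 ^ n := by positivity
    have hpb : (0:ℝ) < (((n:ℝ)+1)/2)^(n+1) := by positivity
    have key : 2*((n:ℝ)+1) * (((n:ℝ)-1)*2^n + (((n:ℝ)+1)/2)^(n+1)) < 2*((n:ℝ)+1)*(n:ℝ)^n := by
      apply mul_lt_mul_of_pos_left ih (by linarith)
    have h2pow : (2:ℝ) ^ (n+1) = 2 * 2^n := by rw [pow_succ]; ring
    calc ((n:ℝ) + 1 - 1) * 2 ^ (n + 1) + (((n:ℝ) + 1 + 1) / 2) ^ (n + 1 + 1)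
        = (n:ℝ) * (2 * 2^n) + (((n:ℝ)+2)/2)^(n+2) := by rw [← h2pow]; ring_nf
      _ ≤ 2*((n:ℝ)+1)*(((n:ℝ)-1)*2^n) + 2*((n:ℝ)+1)*(((n:ℝ)+1)/2)^(n+1) := by
          have h1 : (n:ℝ) * 2 ≤ 2*((n:ℝ)+1)*((n:ℝ)-1) := by nlinarith
          have h2 := mul_le_mul_of_nonneg_right h1 hpa.le
          nlinarith
      _ < 2*((n:ℝ)+1)*(n:ℝ)^n := by nlinarith
      _ ≤ ((n:ℝ)+1)^(n+1) := hA

theorem tech_ineq_r (r : ℕ) (hr : 5 ≤ r) :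
    ((r : ℝ) - 2) * 2 ^ (r - 1) + ((r : ℝ) / 2) ^ r < ((r : ℝ) - 1) ^ (r - 1) := by
  obtain ⟨n, rfl⟩ : ∃ n, r = n + 1 := ⟨r - 1, by omega⟩
  have hn : 4 ≤ n := by omega
  have := key_ineq n hn
  simp only [Nat.add_sub_cancel]
  push_cast
  have e1 : ((n:ℝ)+1-2) = (n:ℝ)-1 := by ring
  have e2 : ((n:ℝ)+1-1) = (n:ℝ) := by ring
  rw [e1, e2]
  exact this
end

section
/- For all integers k ≥ 2 and r ≥ 2k+1, the inequality (r-2)·2^(r-1)/r^r + 1/k^r < 1/k^(r-1) holds. -/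
lemma bern2 (x : ℝ) (hx : 0 ≤ x) (n : ℕ) :
    1 + n * x + n * ((n : ℝ) - 1) / 2 * x ^ 2 ≤ (1 + x) ^ n := by
  induction n with
  | zero => simp
  | succ m ih =>
    have h1 : (0:ℝ) ≤ (m:ℝ) := Nat.cast_nonneg m
    have hp : (0:ℝ) ≤ (1 + x) ^ m := by positivity
    have e : (1 + x) ^ (m + 1) = (1 + x) ^ m * (1 + x) := pow_succ _ _
    have hstep := mul_le_mul_of_nonneg_right ih (by linarith : (0:ℝ) ≤ 1 + x)
    have hm : (0:ℝ) ≤ (m:ℝ) * ((m:ℝ) - 1) := by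
      rcases Nat.eq_zero_or_pos m with h | h
      · simp [h]
      · have : (1:ℝ) ≤ (m:ℝ) := by exact_mod_cast h
        nlinarith
    push_cast
    nlinarith [hstep, mul_nonneg hm (mul_nonneg hx (sq_nonneg x))]

theorem lambda0_ineq (k r : ℕ) (hk : 2 ≤ k) (hr : 2 * k + 1 ≤ r) :
    ((r : ℝ) - 2) * 2 ^ (r - 1) / (r : ℝ) ^ r + 1 / (k : ℝ) ^ r <
      1 / (k : ℝ) ^ (r - 1) := by
  have hK : (2:ℝ) ≤ (k:ℝ) := by exact_mod_cast hk
  have hR : 2 * (k:ℝ) + 1 ≤ (r:ℝ) := by exact_mod_cast hr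
  have hk0 : (0:ℝ) < (k:ℝ) := by linarith
  have hr0 : (0:ℝ) < (r:ℝ) := by linarith
  have hr1 : r - 1 + 1 = r := by omega
  have hkpow : (0:ℝ) < (k:ℝ) ^ r := by positivity
  have hrpow : (0:ℝ) < (r:ℝ) ^ r := by positivity
  have hkpow1 : (0:ℝ) < (k:ℝ) ^ (r - 1) := by positivity
  have ekr : (k:ℝ) ^ r = (k:ℝ) ^ (r - 1) * (k:ℝ) := by
    rw [← pow_succ, hr1]
  have e2r : (2:ℝ) ^ r = (2:ℝ) ^ (r - 1) * 2 := by
    rw [← pow_succ, hr1]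
  -- key inequality
  have h2k : (0:ℝ) < 2 * (k:ℝ) := by linarith
  set X : ℝ := 1 / (2 * (k:ℝ)) with hXdef
  have hX0 : 0 < X := by positivity
  have hX : (2 * (k:ℝ)) * X = 1 := by
    rw [hXdef]; field_simp
  -- polynomial inequality
  have hC' : ((r:ℝ) - 2) * (2*(k:ℝ))^2 <
      2 * ((k:ℝ) - 1) * ((2*(k:ℝ))^2 + (r:ℝ) * (2*(k:ℝ)) + (r:ℝ) * ((r:ℝ) - 1) / 2) := by
    nlinarith [sq_nonneg ((r:ℝ) - 2*(k:ℝ) - 1), sq_nonneg ((r:ℝ) - 4), sq_nonneg ((k:ℝ) - 2),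
      mul_nonneg (sub_nonneg.2 hK) (sub_nonneg.2 hR), sq_nonneg ((r:ℝ) - 3*(k:ℝ))]
  have e5 : 1 + (r:ℝ) * X + (r:ℝ) * ((r:ℝ) - 1) / 2 * X ^ 2
      = ((2*(k:ℝ))^2 + (r:ℝ) * (2*(k:ℝ)) + (r:ℝ) * ((r:ℝ) - 1) / 2) * X ^ 2 := by
    rw [hXdef]; field_simp
  have hC : (r:ℝ) - 2 < 2 * ((k:ℝ) - 1) * (1 + (r:ℝ) * X + (r:ℝ) * ((r:ℝ) - 1) / 2 * X ^ 2) := by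
    rw [e5]
    have := mul_lt_mul_of_pos_right hC' (show (0:ℝ) < X^2 by positivity)
    calc (r:ℝ) - 2 = ((r:ℝ) - 2) * (2*(k:ℝ))^2 * X^2 := by
          rw [show ((r:ℝ) - 2) * (2*(k:ℝ))^2 * X^2 = ((r:ℝ)-2) * ((2*(k:ℝ))*X)^2 by ring, hX]; ring
      _ < 2 * ((k:ℝ) - 1) * ((2*(k:ℝ))^2 + (r:ℝ) * (2*(k:ℝ)) + (r:ℝ) * ((r:ℝ) - 1) / 2) * X^2 := this
      _ = 2 * ((k:ℝ) - 1) * (((2*(k:ℝ))^2 + (r:ℝ) * (2*(k:ℝ)) + (r:ℝ) * ((r:ℝ) - 1) / 2) * X^2) := by ring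
  have hb := bern2 X hX0.le r
  have hk1 : (0:ℝ) < (k:ℝ) - 1 := by linarith
  have e3 : (1 + X) ^ r = (2*(k:ℝ)+1) ^ r / (2*(k:ℝ)) ^ r := by
    rw [hXdef, ← div_pow]
    congr 1
    field_simp
  have e4 : (2*(k:ℝ)+1) ^ r ≤ (r:ℝ) ^ r := by
    apply pow_le_pow_left₀ (by positivity) hR
  have h2kpow : (0:ℝ) < (2*(k:ℝ)) ^ r := by positivity
  have hpow : ((r:ℝ) - 2) * (2*(k:ℝ))^r < 2 * ((k:ℝ) - 1) * (r:ℝ)^r := by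
    calc ((r:ℝ) - 2) * (2*(k:ℝ))^r
        < 2 * ((k:ℝ) - 1) * (1 + (r:ℝ) * X + (r:ℝ) * ((r:ℝ) - 1) / 2 * X ^ 2) * (2*(k:ℝ))^r := by
          exact mul_lt_mul_of_pos_right hC h2kpow
      _ ≤ 2 * ((k:ℝ) - 1) * (1 + X) ^ r * (2*(k:ℝ))^r := by
          have := mul_le_mul_of_nonneg_left hb (by linarith : (0:ℝ) ≤ 2 * ((k:ℝ) - 1))
          exact mul_le_mul_of_nonneg_right this h2kpow.le
      _ = 2 * ((k:ℝ) - 1) * (2*(k:ℝ)+1) ^ r := by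
          rw [e3]; field_simp
      _ ≤ 2 * ((k:ℝ) - 1) * (r:ℝ)^r := by
          exact mul_le_mul_of_nonneg_left e4 (by linarith)
  have key : ((r:ℝ) - 2) * 2 ^ (r - 1) * (k:ℝ)^r < ((k:ℝ) - 1) * (r:ℝ)^r := by
    have e6 : (2*(k:ℝ))^r = 2 * (2:ℝ)^(r-1) * (k:ℝ)^r := by
      rw [mul_pow, e2r]; ring
    rw [e6] at hpow
    linarith
  -- finish
  have e7 : 1 / (k:ℝ) ^ (r-1) - 1 / (k:ℝ) ^ r = ((k:ℝ) - 1) / (k:ℝ) ^ r := by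
    rw [ekr]
    field_simp
  have h8 : ((r:ℝ) - 2) * 2 ^ (r - 1) / (r : ℝ) ^ r < ((k:ℝ) - 1) / (k:ℝ) ^ r := by
    rw [div_lt_div_iff₀ hrpow hkpow]
    exact key
  linarith
end

section
/- Let k ≥ 2 be an integer and ρ ∈ ℝ. If there exists a k×k matrix A with nonnegative entries, all row sums and column sums equal to 1, and k^{r-2}·Σ_{i,j} a_{ij}^r = ρ (for a fixed integer r ≥ 2), then 1 ≤ ρ ≤ k^{r-1}. Conversely, for every ρ ∈ [1, k^{r-1}] such a doubly stochastic matrix exists. -/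
/-!
By Hölder (the power mean inequality) over the `N²` entries, whose sum is `N`, the power sum of
a doubly stochastic `N × N` matrix is at least `N² · N^{-r}`; since every entry lies in `[0, 1]`,
it is at most the sum of the entries, `N`. The uniform matrix and the identity attain the two
bounds, and the set of doubly stochastic matrices is convex, hence connected, so the continuous
power sum takes every value in between on it.
-/

open Finset

variable {n : Type*} [Fintype n] [DecidableEq n]

/-- The paper's `ρ`, for an `N × N` matrix. -/
noncomputable def normalizedPowerSum (r : ℕ) (M : Matrix n n ℝ) : ℝ :=
  (Fintype.card n : ℝ) ^ (r - 2) * ∑ i, ∑ j, M i j ^ r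

omit [DecidableEq n] in
theorem continuous_normalizedPowerSum (r : ℕ) :
    Continuous (normalizedPowerSum r : Matrix n n ℝ → ℝ) := by
  unfold normalizedPowerSum
  fun_prop

theorem sum_sum_pow_le_card_of_mem_doublyStochastic {M : Matrix n n ℝ}
    (hM : M ∈ doublyStochastic ℝ n) {r : ℕ} (hr : r ≠ 0) :
    ∑ i, ∑ j, M i j ^ r ≤ Fintype.card n :=
  calc ∑ i, ∑ j, M i j ^ r
      ≤ ∑ i, ∑ j, M i j := by
        gcongr with i _ j _
        exact pow_le_of_le_one (nonneg_of_mem_doublyStochastic hM)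
          (le_one_of_mem_doublyStochastic hM) hr
    _ = Fintype.card n := by simp [sum_row_of_mem_doublyStochastic hM]

theorem card_pow_div_le_sum_sum_pow_of_mem_doublyStochastic {M : Matrix n n ℝ}
    (hM : M ∈ doublyStochastic ℝ n) (m : ℕ) :
    (Fintype.card n : ℝ) ^ (m + 1) / ((Fintype.card n : ℝ) ^ 2) ^ m ≤
      ∑ i, ∑ j, M i j ^ (m + 1) := by
  have hJensen := pow_sum_div_card_le_sum_pow (s := (univ : Finset (n × n)))
    (f := fun p => M p.1 p.2) (fun p _ => nonneg_of_mem_doublyStochastic hM) m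
  have hsum : ∑ p : n × n, M p.1 p.2 = Fintype.card n := by
    simp [Fintype.sum_prod_type, sum_row_of_mem_doublyStochastic hM]
  rw [hsum, card_univ, Fintype.card_prod, Fintype.sum_prod_type] at hJensen
  simpa [sq] using hJensen

theorem one_le_normalizedPowerSum_of_mem_doublyStochastic [Nonempty n] {M : Matrix n n ℝ}
    (hM : M ∈ doublyStochastic ℝ n) {r : ℕ} (hr : 2 ≤ r) : 1 ≤ normalizedPowerSum r M := by
  obtain ⟨m, rfl⟩ : ∃ m, r = m + 2 := ⟨r - 2, by omega⟩
  have hN : (0 : ℝ) < Fintype.card n := by exact_mod_cast Fintype.card_pos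
  rw [normalizedPowerSum, Nat.add_sub_cancel]
  calc (1 : ℝ)
      = (Fintype.card n : ℝ) ^ m *
          ((Fintype.card n : ℝ) ^ (m + 1 + 1) / ((Fintype.card n : ℝ) ^ 2) ^ (m + 1)) := by
        field_simp
        ring
    _ ≤ (Fintype.card n : ℝ) ^ m * ∑ i, ∑ j, M i j ^ (m + 2) := by
        gcongr
        exact card_pow_div_le_sum_sum_pow_of_mem_doublyStochastic hM (m + 1)

theorem normalizedPowerSum_le_of_mem_doublyStochastic {M : Matrix n n ℝ}
    (hM : M ∈ doublyStochastic ℝ n) {r : ℕ} (hr : 2 ≤ r) :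
    normalizedPowerSum r M ≤ (Fintype.card n : ℝ) ^ (r - 1) :=
  calc normalizedPowerSum r M
      ≤ (Fintype.card n : ℝ) ^ (r - 2) * Fintype.card n := by
        unfold normalizedPowerSum
        gcongr
        exact sum_sum_pow_le_card_of_mem_doublyStochastic hM (by omega)
    _ = (Fintype.card n : ℝ) ^ (r - 1) := by
        rw [← pow_succ]
        congr 1
        omega

omit [DecidableEq n] in
theorem normalizedPowerSum_const [Nonempty n] {r : ℕ} (hr : 2 ≤ r) :
    normalizedPowerSum r (Matrix.of fun _ _ : n => (Fintype.card n : ℝ)⁻¹) = 1 := by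
  obtain ⟨m, rfl⟩ : ∃ m, r = m + 2 := ⟨r - 2, by omega⟩
  have hN : (Fintype.card n : ℝ) ≠ 0 := by exact_mod_cast Fintype.card_ne_zero
  simp only [normalizedPowerSum, Nat.add_sub_cancel, Matrix.of_apply, sum_const, card_univ,
    nsmul_eq_mul, inv_pow]
  field_simp
  ring

theorem const_mem_doublyStochastic [Nonempty n] :
    Matrix.of (fun _ _ : n => (Fintype.card n : ℝ)⁻¹) ∈ doublyStochastic ℝ n := by
  have hN : (Fintype.card n : ℝ) ≠ 0 := by exact_mod_cast Fintype.card_ne_zero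
  rw [mem_doublyStochastic_iff_sum]
  simp [hN]

theorem normalizedPowerSum_one {r : ℕ} (hr : 2 ≤ r) :
    normalizedPowerSum r (1 : Matrix n n ℝ) = (Fintype.card n : ℝ) ^ (r - 1) := by
  have hdiag : ∀ i j : n, (1 : Matrix n n ℝ) i j ^ r = (1 : Matrix n n ℝ) i j := fun i j =>
    by rcases eq_or_ne i j with rfl | hij <;> simp [*, show r ≠ 0 by omega]
  simp only [normalizedPowerSum, hdiag]
  simp only [Matrix.one_apply, sum_ite_eq, mem_univ, if_true, sum_const, card_univ, nsmul_eq_mul,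
    mul_one]
  rw [← pow_succ]
  congr 1
  omega

theorem exists_mem_doublyStochastic_normalizedPowerSum_eq [Nonempty n] {r : ℕ} (hr : 2 ≤ r)
    {ρ : ℝ} (hρ : ρ ∈ Set.Icc 1 ((Fintype.card n : ℝ) ^ (r - 1))) :
    ∃ M ∈ doublyStochastic ℝ n, normalizedPowerSum r M = ρ := by
  rw [← normalizedPowerSum_const (n := n) hr, ← normalizedPowerSum_one (n := n) hr] at hρ
  exact convex_doublyStochastic.isPreconnected.intermediate_value
    (const_mem_doublyStochastic (n := n)) (Submonoid.one_mem _)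
    (continuous_normalizedPowerSum r).continuousOn hρ

/-- Feasibility of the constraint `k^{r-2} Σ a_{ij}^r = ρ` over doubly stochastic
matrices: such a matrix exists iff `1 ≤ ρ ≤ k^{r-1}`. -/
theorem doubly_stochastic_power_sum (k r : ℕ) (hk : 2 ≤ k) (hr : 2 ≤ r) :
    (∀ (ρ : ℝ) (A : Matrix (Fin k) (Fin k) ℝ),
      (∀ i j, 0 ≤ A i j) →
      (∀ i, ∑ j, A i j = 1) →
      (∀ j, ∑ i, A i j = 1) →
      (k : ℝ) ^ (r - 2) * ∑ i, ∑ j, A i j ^ r = ρ →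
      1 ≤ ρ ∧ ρ ≤ (k : ℝ) ^ (r - 1)) ∧
    (∀ ρ : ℝ, 1 ≤ ρ → ρ ≤ (k : ℝ) ^ (r - 1) →
      ∃ A : Matrix (Fin k) (Fin k) ℝ,
        (∀ i j, 0 ≤ A i j) ∧
        (∀ i, ∑ j, A i j = 1) ∧
        (∀ j, ∑ i, A i j = 1) ∧
        (k : ℝ) ^ (r - 2) * ∑ i, ∑ j, A i j ^ r = ρ) := by
  have : NeZero k := ⟨by omega⟩
  have hρ_def (A : Matrix (Fin k) (Fin k) ℝ) :
      normalizedPowerSum r A = (k : ℝ) ^ (r - 2) * ∑ i, ∑ j, A i j ^ r := by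
    simp [normalizedPowerSum]
  refine ⟨fun ρ A hnonneg hrow hcol hρ => ?_, fun ρ hlow hhigh => ?_⟩
  · have hA : A ∈ doublyStochastic ℝ (Fin k) :=
      mem_doublyStochastic_iff_sum.2 ⟨hnonneg, hrow, hcol⟩
    rw [← hρ, ← hρ_def]
    simpa using (⟨one_le_normalizedPowerSum_of_mem_doublyStochastic hA hr,
      normalizedPowerSum_le_of_mem_doublyStochastic hA hr⟩ : _ ∧ _)
  · obtain ⟨A, hA, hAρ⟩ := exists_mem_doublyStochastic_normalizedPowerSum_eq (n := Fin k) hr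
      (ρ := ρ) (by simpa using And.intro hlow hhigh)
    obtain ⟨hnonneg, hrow, hcol⟩ := mem_doublyStochastic_iff_sum.1 hA
    exact ⟨A, hnonneg, hrow, hcol, hρ_def A ▸ hAρ⟩
end
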